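/- arXiv:2506.17142 — 5 statements merged into one kernel-verified Lean document; each statement's English description precedes it below -/
import Mathlib

section
/- The relational structure M̃ constructed on X × X (with X finite of size m) is proper: if (x_j, x_k) R̃_i (x_{j'}, x_{k'}) holds for all agents i ∈ {1, ..., n} with n ≥ 2, then (x_j, x_k) = (x_{j'}, x_{k'}). -/
/-- The constructed structure M̃ on X × X (X = Fin m finite) is proper:
if (j,k) R̃_i (j',k') for all agents i (n ≥ 2 agents), then (j,k) = (j',k'). -/
theorem tilde_structure_proper (m n : ℕ) (hn : 2 ≤ n)
    (R : Fin n → Fin m → Fin m → Prop)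
    (Rt : Fin n → (Fin m × Fin m) → (Fin m × Fin m) → Prop)
    (hRt1 : ∀ a b, Rt ⟨0, by omega⟩ a b ↔ (b.2 - b.1 = a.2 - a.1 ∧ R ⟨0, by omega⟩ a.1 b.1))
    (hRti : ∀ i : Fin n, i ≠ ⟨0, by omega⟩ → ∀ a b, Rt i a b ↔ (a.2 = b.2 ∧ R i a.1 b.1))
    (a b : Fin m × Fin m) (h : ∀ i, Rt i a b) : a = b := by
  rcases Nat.eq_zero_or_pos m with rfl | hm
  · exact a.1.elim0
  have : NeZero m := ⟨by omega⟩
  have h2 : a.2 = b.2 := ((hRti ⟨1, by omega⟩ (by simp [Fin.ext_iff]) a b).mp (h _)).1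
  have h1 : b.2 - b.1 = a.2 - a.1 := ((hRt1 a b).mp (h _)).1
  rw [← h2] at h1
  have : a.1 = b.1 := by
    have := sub_right_injective (G := Fin m) h1
    exact this.symm
  exact Prod.ext this h2
end

section
/- Projection to the first coordinate is a surjective bounded morphism from the constructed structure M̃ (on X × X, X finite) to M: it is surjective, preserves atomic valuations, and satisfies the 'forth' condition (if (x_j,x_k) R̃_i (x_{j'},x_{k'}) then x_j R_i x_{j'}) and the 'back' condition (if π_1(x_j,x_k) R_i x' then there exists w ∈ X × X with (x_j,x_k) R̃_i w and π_1(w) = x') for every relation R̃_i. -/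
/-- Projection to the first coordinate is a surjective bounded morphism from the
finite construction M̃ (on Fin m × Fin m) to M: surjective, valuation-preserving,
and satisfying the forth and back conditions for every relation. -/
theorem proj_surjective_bounded_morphism_finite (m n : ℕ) (hm : 0 < m)
    (R : Fin n → Fin m → Fin m → Prop) (v : ℕ → Set (Fin m))
    (Rt : Fin n → (Fin m × Fin m) → (Fin m × Fin m) → Prop)
    (vt : ℕ → Set (Fin m × Fin m))
    (hvt : ∀ p, vt p = {a : Fin m × Fin m | a.1 ∈ v p})
    (hRt1 : ∀ (i : Fin n), (i : ℕ) = 0 →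
      ∀ a b, Rt i a b ↔ (b.2 - b.1 = a.2 - a.1 ∧ R i a.1 b.1))
    (hRti : ∀ (i : Fin n), (i : ℕ) ≠ 0 →
      ∀ a b, Rt i a b ↔ (a.2 = b.2 ∧ R i a.1 b.1)) :
    Function.Surjective (Prod.fst : Fin m × Fin m → Fin m) ∧
    (∀ p a, a ∈ vt p ↔ a.1 ∈ v p) ∧
    (∀ i a b, Rt i a b → R i a.1 b.1) ∧
    (∀ i (a : Fin m × Fin m) (x' : Fin m), R i a.1 x' →
      ∃ w : Fin m × Fin m, Rt i a w ∧ w.1 = x') := by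
  refine ⟨fun x => ⟨(x, x), rfl⟩, fun p a => by rw [hvt p]; rfl, ?_, ?_⟩
  · intro i a b h
    by_cases h0 : (i : ℕ) = 0
    · exact ((hRt1 i h0 a b).mp h).2
    · exact ((hRti i h0 a b).mp h).2
  · intro i a x' h
    by_cases h0 : (i : ℕ) = 0
    · exact ⟨(x', x' + (a.2 - a.1)), (hRt1 i h0 a _).mpr ⟨by haveI := Fin.pos_iff_nonempty.mp hm; haveI : NeZero m := ⟨hm.ne'⟩; exact add_sub_cancel_left x' _, h⟩, rfl⟩
    · exact ⟨(x', a.2), (hRti i h0 a _).mpr ⟨rfl, h⟩, rfl⟩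
end

section
/- The relational structure M̃ constructed on X × X for countable X using a bijection f : X → ℤ is proper: if (x, y) R̃_i (x', y') holds for all i ∈ {1, ..., n} with n ≥ 2, then (x, y) = (x', y'). -/
/-- The structure M̃ on X × X for countable X (via a bijection f : X → ℤ) is
proper: if (x,y) R̃_i (x',y') for all i (with n ≥ 2), then (x,y) = (x',y'). -/
theorem countable_tilde_proper (X : Type) (f : X ≃ ℤ) (n : ℕ) (hn : 2 ≤ n)
    (R : Fin n → X → X → Prop)
    (Rt : Fin n → (X × X) → (X × X) → Prop)
    (hRt1 : ∀ (i : Fin n), (i : ℕ) = 0 →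
      ∀ a b, Rt i a b ↔ (f a.2 - f a.1 = f b.2 - f b.1 ∧ R i a.1 b.1))
    (hRti : ∀ (i : Fin n), (i : ℕ) ≠ 0 →
      ∀ a b, Rt i a b ↔ (a.2 = b.2 ∧ R i a.1 b.1))
    (a b : X × X) (h : ∀ i, Rt i a b) : a = b := by
  have h0 : (⟨0, by omega⟩ : Fin n).1 = 0 := rfl
  have h1 : (⟨1, by omega⟩ : Fin n).1 ≠ 0 := by simp
  obtain ⟨hdiff, -⟩ := (hRt1 _ h0 a b).1 (h _)
  obtain ⟨hsnd, -⟩ := (hRti _ h1 a b).1 (h _)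
  have hfst : a.1 = b.1 := f.injective (by rw [hsnd] at hdiff; omega)
  exact Prod.ext hfst hsnd
end

section
/- For countable X with bijection f : X → ℤ, projection to the first coordinate is a surjective bounded morphism from M̃ to M: it is surjective, preserves atomic valuations, satisfies 'forth' (if (x,y) R̃_i (x',y') then x R_i x'), and satisfies 'back' (if x R_i x' then for any (x,y) ∈ X × X there exists y' with (x,y) R̃_i (x',y')). -/
/-- For countable X with bijection f : X → ℤ, projection to the first coordinate
is a surjective bounded morphism from M̃ to M: surjective, valuation-preserving,
with the forth and back conditions for every relation. -/
theorem countable_proj_bounded_morphism (X : Type) (f : X ≃ ℤ) (n : ℕ)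
    (R : Fin n → X → X → Prop) (v : ℕ → Set X)
    (Rt : Fin n → (X × X) → (X × X) → Prop) (vt : ℕ → Set (X × X))
    (hvt : ∀ p, vt p = {a : X × X | a.1 ∈ v p})
    (hRt1 : ∀ (i : Fin n), (i : ℕ) = 0 →
      ∀ a b, Rt i a b ↔ (f a.2 - f a.1 = f b.2 - f b.1 ∧ R i a.1 b.1))
    (hRti : ∀ (i : Fin n), (i : ℕ) ≠ 0 →
      ∀ a b, Rt i a b ↔ (a.2 = b.2 ∧ R i a.1 b.1)) :
    Function.Surjective (Prod.fst : X × X → X) ∧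
    (∀ p a, a ∈ vt p ↔ a.1 ∈ v p) ∧
    (∀ i a b, Rt i a b → R i a.1 b.1) ∧
    (∀ i (x y x' : X), R i x x' → ∃ y', Rt i (x, y) (x', y')) := by
  refine ⟨fun x => ⟨(x, x), rfl⟩, fun p a => by rw [hvt p]; rfl, ?_, ?_⟩
  · intro i a b h
    by_cases hi : (i : ℕ) = 0
    · exact ((hRt1 i hi a b).mp h).2
    · exact ((hRti i hi a b).mp h).2
  · intro i x y x' h
    by_cases hi : (i : ℕ) = 0
    · refine ⟨f.symm (f y - f x + f x'), ?_⟩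
      rw [hRt1 i hi]
      simp [h]
    · exact ⟨y, (hRti i hi _ _).mpr ⟨rfl, h⟩⟩
end

section
/- Every relational structure over a type X equipped with a group structure G and a bijection f : X → G is the surjective bounded-morphic image of a proper structure on X × X, where for i > 1, (x,y) R̃_i (x',y') iff y = y' and x R_i x', and (x,y) R̃_1 (x',y') iff f(x)⁻¹·f(y) = f(x')⁻¹·f(y') and x R_1 x'. In particular, the key facts needed are: properness holds, and the back condition for R̃_1 holds by choosing y' = f⁻¹(f(x')·f(x)⁻¹·f(y)). -/
/-- Group-based construction: for a relational structure on X with n ≥ 2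
relations and a bijection f : X → G (G a group), the structure on X × X with
(x,y) R̃_i (x',y') iff y = y' and x R_i x' (for i > 1), and
(x,y) R̃_1 (x',y') iff (f x)⁻¹ * f y = (f x')⁻¹ * f y' and x R_1 x',
is proper and projection to the first coordinate is a surjective bounded
morphism onto the original structure (the back condition for R̃_1 being
witnessed by y' = f⁻¹(f x' * (f x)⁻¹ * f y)). -/
theorem group_construction_proper_cover (G : Type) [Group G]
    (X : Type) (f : X ≃ G) (n : ℕ) (hn : 2 ≤ n)
    (R : Fin n → X → X → Prop) (v : ℕ → Set X)
    (Rt : Fin n → (X × X) → (X × X) → Prop) (vt : ℕ → Set (X × X))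
    (hvt : ∀ p, vt p = {a : X × X | a.1 ∈ v p})
    (hRt1 : ∀ (i : Fin n), (i : ℕ) = 0 →
      ∀ a b, Rt i a b ↔ ((f a.1)⁻¹ * f a.2 = (f b.1)⁻¹ * f b.2 ∧ R i a.1 b.1))
    (hRti : ∀ (i : Fin n), (i : ℕ) ≠ 0 →
      ∀ a b, Rt i a b ↔ (a.2 = b.2 ∧ R i a.1 b.1)) :
    -- properness
    (∀ a b : X × X, (∀ i, Rt i a b) → a = b) ∧
    -- surjectivity
    Function.Surjective (Prod.fst : X × X → X) ∧
    -- valuation preservation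
    (∀ p a, a ∈ vt p ↔ a.1 ∈ v p) ∧
    -- forth
    (∀ i a b, Rt i a b → R i a.1 b.1) ∧
    -- back, with the explicit witness for i = 0 (i.e. R̃_1)
    (∀ i (a : X × X) (x' : X), R i a.1 x' → ∃ w : X × X, Rt i a w ∧ w.1 = x') ∧
    (∀ (i : Fin n), (i : ℕ) = 0 → ∀ (x y x' : X), R i x x' →
      Rt i (x, y) (x', f.symm (f x' * (f x)⁻¹ * f y))) := by
  refine ⟨?_, ?_, ?_, ?_, ?_, ?_⟩
  · intro a b h
    have h1 : a.2 = b.2 := ((hRti ⟨1, by omega⟩ (by simp) a b).mp (h _)).1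
    have h0 := ((hRt1 ⟨0, by omega⟩ rfl a b).mp (h _)).1
    rw [h1] at h0
    have : f a.1 = f b.1 := by
      have := mul_right_cancel h0
      exact inv_injective this
    exact Prod.ext (f.injective this) h1
  · intro x; exact ⟨(x, x), rfl⟩
  · intro p a; rw [hvt]; rfl
  · intro i a b h
    rcases Nat.eq_zero_or_pos (i : ℕ) with h0 | h0
    · exact ((hRt1 i h0 a b).mp h).2
    · exact ((hRti i (by omega) a b).mp h).2
  · intro i a x' h
    rcases Nat.eq_zero_or_pos (i : ℕ) with h0 | h0
    · refine ⟨(x', f.symm (f x' * (f a.1)⁻¹ * f a.2)), ?_, rfl⟩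
      rw [hRt1 i h0]
      refine ⟨?_, h⟩
      simp [mul_assoc]
    · exact ⟨(x', a.2), (hRti i (by omega) a (x', a.2)).mpr ⟨rfl, h⟩, rfl⟩
  · intro i h0 x y x' h
    rw [hRt1 i h0]
    refine ⟨?_, h⟩
    simp [mul_assoc]
end
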